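/- arXiv:0810.2384 — 4 statements merged into one kernel-verified Lean document; each statement's English description precedes it below -/
import Mathlib

section
/- If G is a group and a, b, c ∈ G, then the Hall–Witt-type product [[a,b],c]·[[b,c],a]·[[c,a],b] lies in the fourth term γ₄(G) = [G,G,G,G] of the lower central series of G. -/
/-! Modulo `γ₄` every triple commutator is central. Then the conjugations in the Hall–Witt
identity drop out and `⁅⁅x⁻¹, y⁆, z⁆ = ⁅⁅x, y⁆, z⁆⁻¹`, so the identity says that a product of the
three triple commutators is trivial, in any order by centrality. Mathlib's commutator is
`⁅x, y⁆ = xyx⁻¹y⁻¹`, so the commutator `x⁻¹y⁻¹xy` of the statement is `⁅x⁻¹, y⁻¹⁆`. -/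

open scoped commutatorElement
open Subgroup

section CentralTripleCommutators

variable {Q : Type*} [Group Q]

theorem conj_eq_self_of_mem_center {z : Q} (hz : z ∈ center Q) (g : Q) : g * z * g⁻¹ = z := by
  rw [mem_center_iff.mp hz g, mul_inv_cancel_right]

theorem commutatorElement_mul_left_of_mem_center {t : Q} (ht : t ∈ center Q) (u w : Q) :
    ⁅u * t, w⁆ = ⁅u, w⁆ := by
  rw [commutatorElement_def, commutatorElement_def, mul_inv_rev, mul_assoc u t w,
    ← mem_center_iff.mp ht w]
  group

theorem commutatorElement_inv_left_of_mem_center {u w : Q} (h : ⁅u, w⁆ ∈ center Q) :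
    ⁅u⁻¹, w⁆ = ⁅u, w⁆⁻¹ := by
  rw [commutatorElement_inv_left, ← commutatorElement_inv, mul_assoc,
    ← mem_center_iff.mp (inv_mem h) u, inv_mul_cancel_left]

theorem commutatorElement_commutatorElement_inv_left
    (hcen : ∀ x y z : Q, ⁅⁅x, y⁆, z⁆ ∈ center Q) (x y z : Q) :
    ⁅⁅x⁻¹, y⁆, z⁆ = ⁅⁅x, y⁆, z⁆⁻¹ := by
  have hsplit : ⁅x⁻¹, y⁆ = ⁅x, y⁆⁻¹ * ⁅⁅x, y⁆, x⁻¹⁆ := by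
    simp only [commutatorElement_def]; group
  rw [hsplit, commutatorElement_mul_left_of_mem_center (hcen x y x⁻¹),
    commutatorElement_inv_left_of_mem_center (hcen x y z)]

theorem commutatorElement_commutatorElement_mul_eq_one_of_mem_center
    (hcen : ∀ x y z : Q, ⁅⁅x, y⁆, z⁆ ∈ center Q) (x y z : Q) :
    ⁅⁅x, y⁆, z⁆ * ⁅⁅z, x⁆, y⁆ * ⁅⁅y, z⁆, x⁆ = 1 := by
  have hallWitt : x * ⁅⁅x⁻¹, y⁆, z⁆ * x⁻¹ * (z * ⁅⁅z⁻¹, x⁆, y⁆ * z⁻¹) *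
      (y * ⁅⁅y⁻¹, z⁆, x⁆ * y⁻¹) = 1 := by
    simpa only [mul_assoc] using conj_commutatorElement_left_commutatorElement_mul x y z
  rw [conj_eq_self_of_mem_center (hcen _ _ _), conj_eq_self_of_mem_center (hcen _ _ _),
    conj_eq_self_of_mem_center (hcen _ _ _)] at hallWitt
  simp only [commutatorElement_commutatorElement_inv_left hcen, ← mul_inv_rev,
    inv_eq_one] at hallWitt
  rw [← mem_center_iff.mp (hcen x y z), mul_eq_one_comm, hallWitt]

end CentralTripleCommutators

theorem mk_mem_center_of_mem_lowerCentralSeries {G : Type*} [Group G] {n : ℕ} {g : G}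
    (hg : g ∈ (⊤ : Subgroup G).lowerCentralSeries n) :
    (g : G ⧸ (⊤ : Subgroup G).lowerCentralSeries (n + 1)) ∈ center _ := by
  refine mem_center_iff.mpr fun h ↦ ?_
  obtain ⟨h, rfl⟩ := QuotientGroup.mk_surjective h
  rw [← commutatorElement_eq_one_iff_mul_comm, ← commutatorElement_inv, inv_eq_one]
  exact (QuotientGroup.eq_one_iff _).mpr (commutator_mem_commutator hg (mem_top h))

theorem commutatorElement_commutatorElement_mem_center_quotient {G : Type*} [Group G]
    (x y z : G ⧸ (⊤ : Subgroup G).lowerCentralSeries 3) : ⁅⁅x, y⁆, z⁆ ∈ center _ := by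
  obtain ⟨x, rfl⟩ := QuotientGroup.mk_surjective x
  obtain ⟨y, rfl⟩ := QuotientGroup.mk_surjective y
  obtain ⟨z, rfl⟩ := QuotientGroup.mk_surjective z
  exact mk_mem_center_of_mem_lowerCentralSeries <| commutator_mem_commutator
    (commutator_mem_commutator (mem_top x) (mem_top y)) (mem_top z)

/-- For any group `G` and `a b c : G`, with `[x,y] = x⁻¹y⁻¹xy`, the product
`[[a,b],c]·[[b,c],a]·[[c,a],b]` lies in the fourth term `γ₄(G)` of the lower
central series (which is `lowerCentralSeries G 3` in Mathlib's indexing,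
since `lowerCentralSeries G 0 = G`). -/
theorem stmt1 {G : Type*} [Group G] (a b c : G) :
    (fun x y : G => x⁻¹ * y⁻¹ * x * y) ((fun x y : G => x⁻¹ * y⁻¹ * x * y) a b) c *
      (fun x y : G => x⁻¹ * y⁻¹ * x * y) ((fun x y : G => x⁻¹ * y⁻¹ * x * y) b c) a *
      (fun x y : G => x⁻¹ * y⁻¹ * x * y) ((fun x y : G => x⁻¹ * y⁻¹ * x * y) c a) b ∈
      (⊤ : Subgroup G).lowerCentralSeries 3 := by
  have hconvention : (fun x y : G => x⁻¹ * y⁻¹ * x * y) ((fun x y : G => x⁻¹ * y⁻¹ * x * y) a b) c *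
      (fun x y : G => x⁻¹ * y⁻¹ * x * y) ((fun x y : G => x⁻¹ * y⁻¹ * x * y) b c) a *
      (fun x y : G => x⁻¹ * y⁻¹ * x * y) ((fun x y : G => x⁻¹ * y⁻¹ * x * y) c a) b =
      ⁅⁅b⁻¹, a⁻¹⁆, c⁻¹⁆ * ⁅⁅c⁻¹, b⁻¹⁆, a⁻¹⁆ * ⁅⁅a⁻¹, c⁻¹⁆, b⁻¹⁆ := by
    simp only [commutatorElement_def]; group
  rw [hconvention, ← QuotientGroup.eq_one_iff, ← QuotientGroup.mk'_apply]
  simp only [map_mul, map_commutatorElement]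
  exact commutatorElement_commutatorElement_mul_eq_one_of_mem_center
    commutatorElement_commutatorElement_mem_center_quotient _ _ _
end

section
/- Let p be a prime and Q a finite p-group. Suppose ζ is an automorphism of Q of order 3 with trivial fixed-point subgroup (C_Q(ζ) = 1). Then Q is nilpotent of class at most 2. -/
/-!
A fixed-point-free automorphism `ζ` of order 3 of a finite group satisfies
`x * ζ x * ζ² x = 1` for every `x`, and counting fixed points of `⟨ζ⟩` shows `3 ∤ |Q|`; both
properties pass to quotients by characteristic subgroups. As `Q` is nilpotent, it suffices to
show `γ₃ = 1` whenever `γ₄ = 1` (applied to `Q ⧸ γ₄(Q)` this gives `γ₃ = γ₄`).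

If `⁅S, G⁆` is central, commutation `S × G → Z(G)` is bilinear and `ζ`-equivariant, and
linear algebra with `1 + ζ + ζ² = 0` forces `⁅c, ζ z⁆ = ⁅ζ c, z⁆ = ζ² ⁅c, z⁆`. Applying this
to `S = γ₂` and to `G ⧸ γ₃`, the trilinear map `T(x, y, z) = ⁅⁅x, y⁆, z⁆` is multiplied by
`ζ`, `ζ`, `ζ²` when `ζ` is applied to its first, second, third argument. Comparing the
Jacobi identity at `(x, y, ζ z)` with the image under `ζ` of the one at `(x, y, z)` gives
`ζ² T = ζ T`, so `T` is fixed by `ζ`, hence trivial.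
-/

open scoped commutatorElement IsMulCommutative
open Subgroup
open MonoidHom (FixedPointFree)

theorem pairing_apply_eq_of_norm_eq_one {M N A : Type*} [CommGroup A] (σ : A →* A)
    (hσ : ∀ a, a * σ a * σ (σ a) = 1) (hfix : FixedPointFree σ)
    (α : M → M) (β : N → N) (f : M → N → A)
    (hα : ∀ m n, f m n * f (α m) n * f (α (α m)) n = 1)
    (hβ : ∀ m n, f m n * f m (β n) * f m (β (β n)) = 1)
    (hf : ∀ m n, σ (f m n) = f (α m) (β n)) (m : M) (n : N) :
    f m (β n) = σ (σ (f m n)) ∧ f (α m) n = σ (σ (f m n)) := by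
  set a := f m n
  set b := f m (β n)
  set q := f (α m) n
  have hq : σ b * q = (σ a)⁻¹ :=
    eq_inv_of_mul_eq_one_left (by rw [← hβ (α m) n, ← hf, ← hf]; ac_rfl)
  have hb : σ q * b = (σ a)⁻¹ :=
    eq_inv_of_mul_eq_one_left (by rw [← hα m (β n), ← hf, ← hf]; ac_rfl)
  have hbq : b = q := by
    refine div_eq_one.mp (hfix _ ?_)
    rw [map_div, div_eq_div_iff_mul_eq_mul, hq, mul_comm, hb]
  -- `e = b / σ² a` satisfies `σ e = e⁻¹`, so the norm identity for `e` reads `e = 1`.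
  have he : σ (b / σ (σ a)) = (b / σ (σ a))⁻¹ := by
    rw [map_div, inv_div, div_eq_div_iff_mul_eq_mul, (congrArg (σ b * ·) hbq).trans hq]
    exact (eq_inv_of_mul_eq_one_right (by rw [← mul_assoc]; exact hσ (σ a))).symm
  have he1 : b / σ (σ a) = 1 := by
    have h := hσ (b / σ (σ a))
    rwa [he, map_inv, he, inv_inv, mul_inv_cancel, one_mul] at h
  exact ⟨div_eq_one.mp he1, hbq ▸ div_eq_one.mp he1⟩

section Group

variable {G : Type*} [Group G]

theorem commutatorElement_mul_left_of_mem_center_s2 (a : G) {b z : G} (h : ⁅b, z⁆ ∈ center G) :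
    ⁅a * b, z⁆ = ⁅a, z⁆ * ⁅b, z⁆ := by
  rw [commutatorElement_mul_left_eq_conj_mul, mem_center_iff.mp h a, mul_inv_cancel_right,
    mem_center_iff.mp h]

theorem commutatorElement_mul_right_of_mem_center {a w : G} (z : G) (h : ⁅a, w⁆ ∈ center G) :
    ⁅a, z * w⁆ = ⁅a, z⁆ * ⁅a, w⁆ := by
  rw [commutatorElement_mul_right_eq_mul_conj, mul_assoc _ z, mem_center_iff.mp h z,
    mul_assoc, mul_inv_cancel_right]

theorem commutatorElement_inv_left_of_mem_center_s2 {a b : G} (h : ⁅a, b⁆ ∈ center G) :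
    ⁅a⁻¹, b⁆ = ⁅a, b⁆⁻¹ := by
  rw [commutatorElement_inv_left, ← commutatorElement_inv,
    mem_center_iff.mp (inv_mem h) a⁻¹, inv_mul_cancel_right]

@[simp]
theorem QuotientGroup.mk_commutatorElement {N : Subgroup G} [N.Normal] (a b : G) :
    ((⁅a, b⁆ : G) : G ⧸ N) = ⁅(a : G ⧸ N), (b : G ⧸ N)⁆ :=
  map_commutatorElement (QuotientGroup.mk' N) a b

theorem commutatorElement_eq_of_mk_eq {N : Subgroup G} [N.Normal]
    (hN : ⁅N, (⊤ : Subgroup G)⁆ = ⊥) {a b : G} (h : (a : G ⧸ N) = b) (z : G) :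
    ⁅a, z⁆ = ⁅b, z⁆ := by
  obtain ⟨t, ht, rfl⟩ : ∃ t ∈ N, a = b * t :=
    ⟨b⁻¹ * a, QuotientGroup.eq.mp h.symm, (mul_inv_cancel_left b a).symm⟩
  have hz : ⁅t, z⁆ = 1 := by
    rw [← mem_bot, ← hN]
    exact commutator_mem_commutator ht (mem_top z)
  rw [commutatorElement_mul_left_eq_conj_mul, hz, mul_one, mul_inv_cancel, one_mul]

theorem Subgroup.Characteristic.apply_mem {H : Subgroup G} [H.Characteristic] (ϕ : MulAut G)
    {g : G} (hg : g ∈ H) : ϕ g ∈ H :=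
  characteristic_iff_le_comap.mp inferInstance ϕ hg

theorem apply_apply_apply_of_norm_eq_one {F : Type*} [FunLike F G G] [MonoidHomClass F G G]
    {β : F} (hnorm : ∀ g, g * β g * β (β g) = 1) (g : G) : β (β (β g)) = g := by
  have h := congrArg β (hnorm g)
  rwa [map_mul, map_mul, map_one,
    eq_inv_of_mul_eq_one_right ((mul_assoc _ _ _).symm.trans (hnorm g)), inv_mul_eq_one,
    eq_comm] at h

theorem fixedPointFree_of_norm_eq_one {β : G → G} (hnorm : ∀ g, g * β g * β (β g) = 1)
    (hcop : (Nat.card G).Coprime 3) : FixedPointFree β := by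
  intro g hg
  have h3 : g ^ 3 = 1 := by
    have h := hnorm g
    rwa [hg, hg, ← pow_three'] at h
  exact orderOf_eq_one_iff.mp <|
    Nat.eq_one_of_dvd_coprimes hcop (orderOf_dvd_natCard g) (orderOf_dvd_of_pow_eq_one h3)

theorem MulAut.coprime_card_of_fixedPointFree [Finite G] {q : ℕ} [Fact q.Prime]
    (ζ : MulAut G) (hord : orderOf ζ = q) (hfix : FixedPointFree ζ) :
    (Nat.card G).Coprime q := by
  have hζ : IsPGroup q (zpowers ζ) :=
    IsPGroup.of_card (n := 1) (by rw [Nat.card_zpowers, hord, pow_one])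
  have hfp : MulAction.fixedPoints (zpowers ζ) G = {1} := by
    ext x
    refine ⟨fun hx => hfix x (hx ⟨ζ, mem_zpowers ζ⟩), ?_⟩
    rintro rfl ⟨φ, _⟩
    exact map_one φ
  have hmod := hζ.card_modEq_card_fixedPoints G
  rw [hfp, Nat.card_unique (α := ({1} : Set G))] at hmod
  exact hmod.gcd_eq.trans (Nat.gcd_one_left q)

def MulAut.quotient (β : MulAut G) (N : Subgroup G) [N.Characteristic] : MulAut (G ⧸ N) :=
  QuotientGroup.congr N N β (characteristic_iff_map_eq.mp inferInstance β)

@[simp]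
theorem MulAut.quotient_mk (β : MulAut G) (N : Subgroup G) [N.Characteristic] (x : G) :
    β.quotient N x = β x :=
  rfl

theorem MulAut.quotient_norm_eq_one {β : MulAut G} (hnorm : ∀ g, g * β g * β (β g) = 1)
    (N : Subgroup G) [N.Characteristic] (u : G ⧸ N) :
    u * β.quotient N u * β.quotient N (β.quotient N u) = 1 := by
  induction u using QuotientGroup.induction_on with
  | H x => simp only [MulAut.quotient_mk, ← QuotientGroup.mk_mul, hnorm, QuotientGroup.mk_one]

theorem lowerCentralSeries_le_center {n : ℕ}
    (h : (⊤ : Subgroup G).lowerCentralSeries (n + 1) = ⊥) :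
    (⊤ : Subgroup G).lowerCentralSeries n ≤ center G := by
  rw [← centralizer_univ]
  exact commutator_eq_bot_iff_le_centralizer.mp h

theorem lowerCentralSeries_quotient_eq_bot_iff {N : Subgroup G} [N.Normal] (n : ℕ) :
    (⊤ : Subgroup (G ⧸ N)).lowerCentralSeries n = ⊥ ↔
      (⊤ : Subgroup G).lowerCentralSeries n ≤ N := by
  rw [← map_top_of_surjective _ (QuotientGroup.mk'_surjective N), ← map_lowerCentralSeries,
    Subgroup.map_eq_bot_iff, QuotientGroup.ker_mk']

theorem lowerCentralSeries_eq_bot_of_succ_eq [Group.IsNilpotent G] {n : ℕ}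
    (h : (⊤ : Subgroup G).lowerCentralSeries (n + 1) = (⊤ : Subgroup G).lowerCentralSeries n) :
    (⊤ : Subgroup G).lowerCentralSeries n = ⊥ := by
  obtain ⟨m, hm⟩ := Subgroup.nilpotent_iff_lowerCentralSeries.mp ‹_›
  have hconst : ∀ k, (⊤ : Subgroup G).lowerCentralSeries (n + k) =
      (⊤ : Subgroup G).lowerCentralSeries n := by
    intro k
    induction k with
    | zero => rfl
    | succ k ih =>
      rw [← add_assoc, Subgroup.lowerCentralSeries_succ, ih, ← Subgroup.lowerCentralSeries_succ,
        h]
  rw [← hconst m, eq_bot_iff, ← hm]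
  exact Subgroup.lowerCentralSeries_antitone _ (Nat.le_add_left m n)

theorem commutatorElement_jacobi (h3 : (⊤ : Subgroup G).lowerCentralSeries 3 = ⊥) (x y z : G) :
    ⁅⁅x, y⁆, z⁆ * ⁅⁅y, z⁆, x⁆ * ⁅⁅z, x⁆, y⁆ = 1 := by
  have hcen : ∀ a b c : G, ⁅⁅a, b⁆, c⁆ ∈ center G := fun a b c =>
    lowerCentralSeries_le_center h3 <| commutator_mem_commutator
      (commutator_mem_commutator (mem_top a) (mem_top b)) (mem_top c)
  have hinv : ∀ a b c : G, ⁅⁅a⁻¹, b⁆, c⁆ = ⁅⁅a, b⁆, c⁆⁻¹ := by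
    intro a b c
    set N := (⊤ : Subgroup G).lowerCentralSeries 2
    have hab : ⁅(a : G ⧸ N), (b : G ⧸ N)⁆ ∈ center (G ⧸ N) :=
      lowerCentralSeries_le_center ((lowerCentralSeries_quotient_eq_bot_iff 2).mpr le_rfl) <|
        commutator_mem_commutator (mem_top _) (mem_top _)
    have hmk : ((⁅a⁻¹, b⁆ : G) : G ⧸ N) = ((⁅a, b⁆⁻¹ : G) : G ⧸ N) := by
      simpa only [QuotientGroup.mk_commutatorElement, QuotientGroup.mk_inv] using
        commutatorElement_inv_left_of_mem_center_s2 hab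
    rw [commutatorElement_eq_of_mk_eq h3 hmk,
      commutatorElement_inv_left_of_mem_center_s2 (hcen a b c)]
  have hconj : ∀ g t : G, t ∈ center G → g * t * g⁻¹ = t := fun g t ht => by
    rw [mem_center_iff.mp ht g, mul_inv_cancel_right]
  have hw : (x * ⁅⁅x⁻¹, y⁆, z⁆ * x⁻¹) * (z * ⁅⁅z⁻¹, x⁆, y⁆ * z⁻¹) *
      (y * ⁅⁅y⁻¹, z⁆, x⁆ * y⁻¹) = 1 := by
    simpa only [mul_assoc] using conj_commutatorElement_left_commutatorElement_mul x y z
  rw [hconj _ _ (hcen _ _ _), hconj _ _ (hcen _ _ _), hconj _ _ (hcen _ _ _), hinv, hinv, hinv,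
    ← mul_inv_rev, ← mul_inv_rev, inv_eq_one] at hw
  rw [mul_assoc, mul_eq_one_comm, mul_assoc]
  exact hw

theorem commutatorElement_apply_eq_of_le_center
    (β : MulAut G) (hnorm : ∀ g, g * β g * β (β g) = 1) (hfix : FixedPointFree β)
    {S : Subgroup G} (hSβ : ∀ s ∈ S, β s ∈ S) (hS : ⁅S, ⊤⁆ ≤ center G) {c : G} (hc : c ∈ S)
    (z : G) : ⁅c, β z⁆ = β (β ⁅c, z⁆) ∧ ⁅β c, z⁆ = β (β ⁅c, z⁆) := by
  have hcen : ∀ s ∈ S, ∀ g, ⁅s, g⁆ ∈ center G := fun s hs g =>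
    hS (commutator_mem_commutator hs (mem_top g))
  let σ : center G →* center G :=
    MonoidHom.mk' (fun x => ⟨β (x : G), Characteristic.apply_mem β x.2⟩)
      fun x y => Subtype.ext (map_mul β (x : G) y)
  let α : S → S := fun s => ⟨β s, hSβ s s.2⟩
  let f : S → G → center G := fun s g => ⟨⁅(s : G), g⁆, hcen s s.2 g⟩
  have key := pairing_apply_eq_of_norm_eq_one σ (fun a => Subtype.ext (hnorm a))
    (fun a ha => Subtype.ext (hfix a (congrArg Subtype.val ha))) α β f
    (fun s g => Subtype.ext <| by
      simp only [f, coe_mul, OneMemClass.coe_one]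
      rw [← commutatorElement_mul_left_of_mem_center_s2 _ (hcen _ (hSβ _ s.2) g),
        ← commutatorElement_mul_left_of_mem_center_s2 _ (hcen _ (hSβ _ (hSβ _ s.2)) g), hnorm,
        commutatorElement_one_left])
    (fun s g => Subtype.ext <| by
      simp only [f, coe_mul, OneMemClass.coe_one]
      rw [← commutatorElement_mul_right_of_mem_center _ (hcen _ s.2 _),
        ← commutatorElement_mul_right_of_mem_center _ (hcen _ s.2 _), hnorm,
        commutatorElement_one_right])
    (fun s g => Subtype.ext (map_commutatorElement β (s : G) g)) ⟨c, hc⟩ z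
  exact ⟨congrArg Subtype.val key.1, congrArg Subtype.val key.2⟩

theorem mk_commutatorElement_apply_eq
    (β : MulAut G) (hnorm : ∀ g, g * β g * β (β g) = 1)
    (hcop : (Nat.card G).Coprime 3) (x y : G) :
    ((⁅x, β y⁆ : G) : G ⧸ (⊤ : Subgroup G).lowerCentralSeries 2) = (β (β ⁅x, y⁆) : G) ∧
      ((⁅β x, y⁆ : G) : G ⧸ (⊤ : Subgroup G).lowerCentralSeries 2) = (β (β ⁅x, y⁆) : G) := by
  set N := (⊤ : Subgroup G).lowerCentralSeries 2
  have hnorm' := MulAut.quotient_norm_eq_one hnorm N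
  simpa only [← QuotientGroup.mk_commutatorElement, MulAut.quotient_mk] using
    commutatorElement_apply_eq_of_le_center (β.quotient N) hnorm' (S := ⊤)
      (fixedPointFree_of_norm_eq_one hnorm'
        (hcop.coprime_dvd_left (card_quotient_dvd_card N)))
      (fun _ _ => mem_top _)
      (lowerCentralSeries_le_center (n := 1)
        ((lowerCentralSeries_quotient_eq_bot_iff 2).mpr le_rfl))
      (mem_top (x : G ⧸ N)) y

theorem commutatorElement_commutatorElement_apply_eq
    (β : MulAut G) (hnorm : ∀ g, g * β g * β (β g) = 1)
    (hcop : (Nat.card G).Coprime 3)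
    (h3 : (⊤ : Subgroup G).lowerCentralSeries 3 = ⊥) (x y z : G) :
    ⁅⁅β x, y⁆, z⁆ = β ⁅⁅x, y⁆, z⁆ ∧ ⁅⁅x, β y⁆, z⁆ = β ⁅⁅x, y⁆, z⁆ ∧
      ⁅⁅x, y⁆, β z⁆ = β (β ⁅⁅x, y⁆, z⁆) := by
  have hγ₂ : ∀ c ∈ (⊤ : Subgroup G).lowerCentralSeries 1, ∀ w : G,
      ⁅c, β w⁆ = β (β ⁅c, w⁆) ∧ ⁅β c, w⁆ = β (β ⁅c, w⁆) := fun c hc w =>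
    commutatorElement_apply_eq_of_le_center β hnorm (fixedPointFree_of_norm_eq_one hnorm hcop)
      (S := (⊤ : Subgroup G).lowerCentralSeries 1) (fun s hs => Characteristic.apply_mem β hs)
      (lowerCentralSeries_le_center (n := 2) h3) hc w
  have hxy : ⁅x, y⁆ ∈ (⊤ : Subgroup G).lowerCentralSeries 1 :=
    commutator_mem_commutator (mem_top x) (mem_top y)
  have hββ : ⁅β (β ⁅x, y⁆), z⁆ = β ⁅⁅x, y⁆, z⁆ := by
    rw [(hγ₂ _ (Characteristic.apply_mem β hxy) z).2, (hγ₂ _ hxy z).2,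
      apply_apply_apply_of_norm_eq_one hnorm]
  obtain ⟨hright, hleft⟩ := mk_commutatorElement_apply_eq β hnorm hcop x y
  exact ⟨(commutatorElement_eq_of_mk_eq h3 hleft z).trans hββ,
    (commutatorElement_eq_of_mk_eq h3 hright z).trans hββ, (hγ₂ _ hxy z).1⟩

theorem lowerCentralSeries_two_eq_bot_of_three_eq_bot
    (β : MulAut G) (hnorm : ∀ g, g * β g * β (β g) = 1)
    (hcop : (Nat.card G).Coprime 3)
    (h3 : (⊤ : Subgroup G).lowerCentralSeries 3 = ⊥) :
    (⊤ : Subgroup G).lowerCentralSeries 2 = ⊥ := by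
  have hT : ∀ x y z : G, ⁅⁅x, y⁆, z⁆ = 1 := by
    intro x y z
    have hslot := commutatorElement_commutatorElement_apply_eq β hnorm hcop h3
    have hJ := commutatorElement_jacobi h3 x y (β z)
    rw [(hslot x y z).2.2, (hslot y z x).2.1, (hslot z x y).1] at hJ
    have hJ' := congrArg β (commutatorElement_jacobi h3 x y z)
    rw [map_mul, map_mul, map_one] at hJ'
    exact fixedPointFree_of_norm_eq_one hnorm hcop _
      (β.injective (mul_right_cancel (mul_right_cancel (hJ.trans hJ'.symm))))
  refine commutator_eq_bot_iff_le_centralizer.mpr <| commutator_le.mpr fun x _ y _ =>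
    mem_centralizer_iff.mpr fun z _ => ?_
  exact (commutatorElement_eq_one_iff_mul_comm.mp (hT x y z)).symm

end Group

/-- If a finite `p`-group `Q` has an automorphism `ζ` of order 3 with trivial
fixed points, then `Q` has nilpotency class at most 2, i.e. `γ₃(Q) = 1`
(`lowerCentralSeries Q 2 = ⊥` in Mathlib's indexing). -/
theorem stmt2 {Q : Type*} [Group Q] [Finite Q] {p : ℕ} (hp : p.Prime)
    (hQ : IsPGroup p Q) (ζ : MulAut Q) (hord : orderOf ζ = 3)
    (hfix : ∀ x : Q, ζ x = x → x = 1) :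
    (⊤ : Subgroup Q).lowerCentralSeries 2 = ⊥ := by
  have : Fact p.Prime := ⟨hp⟩
  have : Fact (Nat.Prime 3) := ⟨Nat.prime_three⟩
  have := hQ.isNilpotent
  have hζ3 : ζ ^ 3 = 1 := hord ▸ pow_orderOf_eq_one ζ
  have hiter : (⇑ζ)^[3] = _root_.id := funext fun g => by
    simpa [pow_succ] using DFunLike.congr_fun hζ3 g
  have hnorm : ∀ g, g * ζ g * ζ (ζ g) = 1 := fun g => by
    simpa [List.range_succ, mul_assoc] using
      FixedPointFree.prod_pow_eq_one (φ := ζ) hfix hiter g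
  have hcop := ζ.coprime_card_of_fixedPointFree hord hfix
  set N := (⊤ : Subgroup Q).lowerCentralSeries 3
  have hquot := lowerCentralSeries_two_eq_bot_of_three_eq_bot (ζ.quotient N)
    (MulAut.quotient_norm_eq_one hnorm N) (hcop.coprime_dvd_left (card_quotient_dvd_card N))
    ((lowerCentralSeries_quotient_eq_bot_iff 3).mpr le_rfl)
  exact lowerCentralSeries_eq_bot_of_succ_eq <| le_antisymm
    (Subgroup.lowerCentralSeries_antitone _ (Nat.le_succ 2))
    ((lowerCentralSeries_quotient_eq_bot_iff 2).mp hquot)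
end

section
/- Let p be a prime and Q a finite p-group admitting an automorphism ζ of order 3 with C_Q(ζ) = 1. Then for all v, w ∈ Q, [v, ζ(w)] = [ζ(v), w] = ζ²([v, w]). -/
/-!
Since `ζ` is fixed-point-free, `x ↦ x⁻¹ ζ x` is onto, and for `g = x⁻¹ ζ x` the product
`g · ζ g · ζ² g` telescopes to `1` because `ζ³ = 1`. Hence `ζ² g = (g · ζ g)⁻¹`, so the map
`g ↦ g · ζ g` reverses products. Evaluated on `ζ² x · y⁻¹` this gives
`⁅x⁻¹, y⁻¹⁆ = ⁅ζ x, ζ² y⁆`, where Mathlib's `⁅a, b⁆ = a b a⁻¹ b⁻¹` makes the paper's `[x, y]`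
equal to `⁅x⁻¹, y⁻¹⁆`. Comparing with the same identity for `(y, x)` lets `ζ` move from one
argument of a commutator to the other, and then `⁅x⁻¹, y⁻¹⁆ = ⁅x, y⁆` as well.
-/

open scoped commutatorElement

theorem MonoidHom.FixedPointFree.mul_apply_mul_apply_apply_eq_one {G F : Type*} [Group G]
    [Finite G] [FunLike F G G] [MonoidHomClass F G G] {φ : F} (hφ : FixedPointFree φ)
    (h3 : φ^[3] = _root_.id) (g : G) : g * φ g * φ (φ g) = 1 := by
  simpa [List.range_succ, mul_assoc] using hφ.prod_pow_eq_one h3 g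

section TrivialNorm

variable {G F : Type*} [Group G] [FunLike F G G] {φ : F}

theorem apply_apply_eq_inv_mul_inv (hφ : ∀ g : G, g * φ g * φ (φ g) = 1) (g : G) :
    φ (φ g) = (φ g)⁻¹ * g⁻¹ := by
  rw [← mul_inv_rev]
  exact eq_inv_of_mul_eq_one_right (hφ g)

theorem apply_apply_apply_eq_self (hφ : ∀ g : G, g * φ g * φ (φ g) = 1) (g : G) :
    φ (φ (φ g)) = g := by
  rw [apply_apply_eq_inv_mul_inv hφ (φ g), apply_apply_eq_inv_mul_inv hφ g]
  group

variable [MonoidHomClass F G G]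

theorem mul_mul_apply_mul_rev (hφ : ∀ g : G, g * φ g * φ (φ g) = 1) (a b : G) :
    a * b * φ (a * b) = b * φ b * (a * φ a) := by
  have h := map_mul φ (φ a) (φ b)
  rw [← map_mul, apply_apply_eq_inv_mul_inv hφ, apply_apply_eq_inv_mul_inv hφ,
    apply_apply_eq_inv_mul_inv hφ] at h
  simpa only [← mul_inv_rev, inv_inj] using h

theorem commutatorElement_inv_left_eq (hφ : ∀ g : G, g * φ g * φ (φ g) = 1) (x y : G) :
    ⁅x⁻¹, y⁆ = ⁅φ x, (φ (φ y))⁻¹⁆ := by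
  have h := mul_mul_apply_mul_rev hφ (φ (φ x)) y
  rw [map_mul, apply_apply_apply_eq_self hφ, apply_apply_eq_inv_mul_inv hφ x] at h
  rw [apply_apply_eq_inv_mul_inv hφ y, commutatorElement_def, commutatorElement_def]
  calc x⁻¹ * y * x⁻¹⁻¹ * y⁻¹
      = φ x * ((φ x)⁻¹ * x⁻¹ * y * (x * φ y)) * (φ y)⁻¹ * y⁻¹ := by group
    _ = φ x * (y * φ y * ((φ x)⁻¹ * x⁻¹ * x)) * (φ y)⁻¹ * y⁻¹ := by rw [h]
    _ = _ := by group

theorem commutatorElement_inv_inv_eq (hφ : ∀ g : G, g * φ g * φ (φ g) = 1) (x y : G) :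
    ⁅x⁻¹, y⁻¹⁆ = ⁅φ x, φ (φ y)⁆ := by
  simpa only [map_inv, inv_inv] using commutatorElement_inv_left_eq hφ x y⁻¹

theorem commutatorElement_apply_left (hφ : ∀ g : G, g * φ g * φ (φ g) = 1) (x y : G) :
    ⁅φ x, y⁆ = ⁅x, φ y⁆ := by
  have hxy := commutatorElement_inv_inv_eq hφ (φ (φ x)) (φ (φ y))
  have hyx := commutatorElement_inv_inv_eq hφ (φ (φ y)) (φ (φ x))
  simp only [apply_apply_apply_eq_self hφ] at hxy hyx
  rw [← commutatorElement_inv, ← hyx, commutatorElement_inv, hxy]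

theorem inv_mul_inv_mul_mul_eq_commutatorElement (hφ : ∀ g : G, g * φ g * φ (φ g) = 1)
    (x y : G) : x⁻¹ * y⁻¹ * x * y = ⁅x, y⁆ := by
  calc x⁻¹ * y⁻¹ * x * y = ⁅x⁻¹, y⁻¹⁆ := by rw [commutatorElement_def, inv_inv, inv_inv]
    _ = ⁅x, y⁆ := by
      rw [commutatorElement_inv_inv_eq hφ, commutatorElement_apply_left hφ,
        apply_apply_apply_eq_self hφ]

theorem commutatorElement_apply_left_eq_apply_apply (hφ : ∀ g : G, g * φ g * φ (φ g) = 1)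
    (x y : G) : ⁅φ x, y⁆ = φ (φ ⁅x, y⁆) := by
  rw [map_commutatorElement, map_commutatorElement, commutatorElement_apply_left hφ (φ x),
    apply_apply_apply_eq_self hφ]

end TrivialNorm

theorem stmt3_general {Q : Type*} [Group Q] [Finite Q] (ζ : MulAut Q) (hord : orderOf ζ = 3)
    (hfix : ∀ x : Q, ζ x = x → x = 1) :
    ∀ v w : Q,
      v⁻¹ * (ζ w)⁻¹ * v * ζ w = (ζ v)⁻¹ * w⁻¹ * ζ v * w ∧
      (ζ v)⁻¹ * w⁻¹ * ζ v * w = ζ (ζ (v⁻¹ * w⁻¹ * v * w)) := by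
  have h3 : (ζ : Q → Q)^[3] = id := by
    funext g
    have hζ3 : ζ ^ 3 = 1 := hord ▸ pow_orderOf_eq_one ζ
    simpa [pow_succ] using congrArg (fun f : MulAut Q => f g) hζ3
  have hN := MonoidHom.FixedPointFree.mul_apply_mul_apply_apply_eq_one hfix h3
  intro v w
  simp only [inv_mul_inv_mul_mul_eq_commutatorElement hN]
  exact ⟨(commutatorElement_apply_left hN v w).symm,
    commutatorElement_apply_left_eq_apply_apply hN v w⟩

/-- If a finite `p`-group `Q` has an automorphism `ζ` of order 3 with trivial
fixed points, then for all `v w : Q`, `[v, ζ(w)] = [ζ(v), w] = ζ²([v,w])`,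
where `[x,y] = x⁻¹y⁻¹xy`. -/
theorem stmt3 {Q : Type*} [Group Q] [Finite Q] {p : ℕ} (hp : p.Prime)
    (hQ : IsPGroup p Q) (ζ : MulAut Q) (hord : orderOf ζ = 3)
    (hfix : ∀ x : Q, ζ x = x → x = 1) :
    ∀ v w : Q,
      v⁻¹ * (ζ w)⁻¹ * v * ζ w = (ζ v)⁻¹ * w⁻¹ * ζ v * w ∧
      (ζ v)⁻¹ * w⁻¹ * ζ v * w = ζ (ζ (v⁻¹ * w⁻¹ * v * w)) :=
  stmt3_general ζ hord hfix
end

section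
/- Let X = AGL₂(3) and S a Sylow 3-subgroup of X. Then C_X(S) = Z(S) is cyclic of order 3. -/
abbrev GL23 := Matrix.GeneralLinearGroup (Fin 2) (ZMod 3)
abbrev V23 := Multiplicative (Fin 2 → ZMod 3)

def glAddAut (g : GL23) : (Fin 2 → ZMod 3) ≃+ (Fin 2 → ZMod 3) where
  toFun v := (g : Matrix (Fin 2) (Fin 2) (ZMod 3)).mulVec v
  invFun v := ((g⁻¹ : GL23) : Matrix (Fin 2) (Fin 2) (ZMod 3)).mulVec v
  left_inv v := by
    have hd : IsUnit ((g : Matrix (Fin 2) (Fin 2) (ZMod 3)).det) :=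
      (Matrix.isUnit_iff_isUnit_det _).mp g.isUnit
    dsimp only
    rw [Matrix.mulVec_mulVec]
    simp [Matrix.nonsing_inv_mul _ hd]
  right_inv v := by
    have hd : IsUnit ((g : Matrix (Fin 2) (Fin 2) (ZMod 3)).det) :=
      (Matrix.isUnit_iff_isUnit_det _).mp g.isUnit
    dsimp only
    rw [Matrix.mulVec_mulVec]
    simp [Matrix.mul_nonsing_inv _ hd]
  map_add' x y := Matrix.mulVec_add _ x y

def aglPhi : GL23 →* MulAut V23 where
  toFun g := AddEquiv.toMultiplicative (glAddAut g)
  map_one' := by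
    ext v
    simp [glAddAut, AddEquiv.toMultiplicative]
  map_mul' g h := by
    ext v
    simp [glAddAut, AddEquiv.toMultiplicative]
    rename_i i
    fin_cases i <;> simp [Matrix.mul_apply, Fin.sum_univ_two] <;> ring

/-- The affine group `AGL₂(3) = (F₃)² ⋊ GL₂(3)`. -/
def AGL23 := SemidirectProduct V23 GL23 aglPhi

instance : Group AGL23 := SemidirectProduct.instGroup

/-!
The affine maps whose linear part is a power of the shear `[[1, 1], [0, 1]]` form a subgroup `U`
of order 27 and index 16, hence a Sylow 3-subgroup. An element centralizing `U` commutes with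
every translation, so its linear part is the identity; commuting with the shear then forces its
translation vector to be a fixed vector of the shear, i.e. a multiple of `e₁`. Hence `C(U)` is the
group of order 3 of translations along `e₁`, which lies in `U`. By Sylow's theorem every `S` is
conjugate to `U`, so `C(S)` also has order 3 and lies in `S`, which makes it `Z(S)`.
-/

open Pointwise

namespace SemidirectProduct

variable {N G : Type*} [Group G]

theorem commute_inl_iff [CommGroup N] {φ : G →* MulAut N} (x : N ⋊[φ] G) (n : N) :
    Commute x (inl n) ↔ φ x.right n = n := by
  rw [Commute, SemiconjBy, SemidirectProduct.ext_iff]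
  simp [mul_comm x.left]

theorem commute_inl_inr_iff [Group N] {φ : G →* MulAut N} (n : N) (g : G) :
    Commute (inl n : N ⋊[φ] G) (inr g) ↔ φ g n = n := by
  rw [Commute, SemiconjBy, SemidirectProduct.ext_iff]
  simp [eq_comm]

end SemidirectProduct

namespace Subgroup

variable {G : Type*} [Group G]

theorem centralizer_pointwise_smul (e : MulAut G) (H : Subgroup G) :
    centralizer ((e • H : Subgroup G) : Set G) = e • centralizer (H : Set G) := by
  ext x
  simp only [mem_centralizer_iff, SetLike.mem_coe, mem_pointwise_smul_iff_inv_smul_mem,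
    MulAut.smul_def]
  constructor
  · intro hx h hh
    apply e.injective
    simpa using hx (e h) (by simpa using hh)
  · intro hx h hh
    apply e⁻¹.injective
    simpa using hx _ hh

theorem centralizer_eq_map_subtype_center {H : Subgroup G} (h : centralizer (H : Set G) ≤ H) :
    centralizer (H : Set G) = (center H).map H.subtype := by
  apply le_antisymm
  · intro x hx
    exact ⟨⟨x, h hx⟩, mem_center_iff.mpr fun y => Subtype.ext (hx y y.2), rfl⟩
  · rintro - ⟨y, hy, rfl⟩ z hz
    exact congrArg Subtype.val (mem_center_iff.mp hy ⟨z, hz⟩)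

theorem card_center_eq_card_centralizer {H : Subgroup G} (h : centralizer (H : Set G) ≤ H) :
    Nat.card (center H) = Nat.card (centralizer (H : Set G)) := by
  rw [centralizer_eq_map_subtype_center h, card_map_of_injective H.subtype_injective]

theorem centralizer_eq_map_subtype_center_of_card_prime {p : ℕ} [Fact p.Prime] {H : Subgroup G}
    (h : centralizer (H : Set G) ≤ H) (hp : Nat.card (centralizer (H : Set G)) = p) :
    centralizer (H : Set G) = (center H).map H.subtype ∧ IsCyclic (center H) ∧
      Nat.card (center H) = p := by
  have hcard : Nat.card (center H) = p := (card_center_eq_card_centralizer h).trans hp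
  exact ⟨centralizer_eq_map_subtype_center h, isCyclic_of_prime_card hcard, hcard⟩

end Subgroup

open Matrix SemidirectProduct Subgroup Multiplicative

def upperShear : GL23 := ⟨!![1, 1; 0, 1], !![1, 2; 0, 1], by decide, by decide⟩

theorem exists_nsmul_of_upperShear_mulVec_eq :
    ∀ v : Fin 2 → ZMod 3, (upperShear : Matrix (Fin 2) (Fin 2) (ZMod 3)) *ᵥ v = v →
      ∃ k : Fin 3, v = (k : ℕ) • ![1, 0] := by
  decide

def e₁ : V23 := ofAdd ![1, 0]

def translationE₁ : AGL23 := inl e₁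

def unitriangularAffine : Subgroup AGL23 := (zpowers upperShear).comap rightHom

theorem inl_mem_unitriangularAffine (v : V23) : (inl v : AGL23) ∈ unitriangularAffine :=
  mem_comap.mpr (one_mem _)

theorem inr_upperShear_mem_unitriangularAffine : (inr upperShear : AGL23) ∈ unitriangularAffine :=
  mem_comap.mpr (mem_zpowers _)

theorem right_eq_one_of_mem_centralizer_unitriangularAffine {x : AGL23}
    (hx : x ∈ centralizer (unitriangularAffine : Set AGL23)) : x.right = 1 :=
  Units.ext <| ext_iff_mulVec.mpr fun v => (one_mulVec v).symm ▸
    congrArg toAdd ((commute_inl_iff x (ofAdd v)).mp (hx _ (inl_mem_unitriangularAffine _)).symm)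

theorem centralizer_unitriangularAffine_le :
    centralizer (unitriangularAffine : Set AGL23) ≤ zpowers translationE₁ := by
  intro x hx
  have hx_inl : inl x.left = x := by
    simpa [right_eq_one_of_mem_centralizer_unitriangularAffine hx] using inl_left_mul_inr_right x
  have hfix := (commute_inl_inr_iff x.left upperShear).mp
    (hx_inl ▸ (hx _ inr_upperShear_mem_unitriangularAffine).symm)
  obtain ⟨k, hk⟩ := exists_nsmul_of_upperShear_mulVec_eq _ (congrArg toAdd hfix)
  rw [← hx_inl, ← ofAdd_toAdd x.left, hk, ofAdd_nsmul, map_pow]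
  exact Subgroup.pow_mem _ (mem_zpowers _) _

theorem zpowers_le_centralizer_unitriangularAffine :
    zpowers translationE₁ ≤ centralizer (unitriangularAffine : Set AGL23) := by
  have hshear : zpowers upperShear ≤ (MulAction.stabilizer (MulAut V23) e₁).comap aglPhi :=
    zpowers_le.mpr (mem_comap.mpr (MulAction.mem_stabilizer_iff.mpr (by decide)))
  exact zpowers_le.mpr fun y hy => (commute_inl_iff y e₁).mpr (hshear (mem_comap.mp hy))

theorem centralizer_unitriangularAffine :
    centralizer (unitriangularAffine : Set AGL23) = zpowers translationE₁ :=
  le_antisymm centralizer_unitriangularAffine_le zpowers_le_centralizer_unitriangularAffine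

theorem zpowers_translationE₁_le_unitriangularAffine :
    zpowers translationE₁ ≤ unitriangularAffine :=
  zpowers_le.mpr (inl_mem_unitriangularAffine _)

theorem card_zpowers_translationE₁ : Nat.card (zpowers translationE₁) = 3 := by
  rw [Nat.card_zpowers]
  refine (orderOf_injective _ inl_injective e₁).trans ?_
  rw [e₁, orderOf_ofAdd_eq_addOrderOf]
  exact addOrderOf_eq_prime (by decide) (by decide)

theorem card_zpowers_upperShear : Nat.card (zpowers upperShear) = 3 := by
  rw [Nat.card_zpowers]
  exact orderOf_eq_prime (by decide) (by decide)

theorem card_GL23 : Nat.card GL23 = 48 := by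
  rw [Matrix.card_GL_field]
  simp [Fin.prod_univ_two]

theorem card_AGL23 : Nat.card AGL23 = 432 := by
  rw [AGL23, SemidirectProduct.card, card_GL23, Nat.card_eq_fintype_card]
  decide

theorem index_unitriangularAffine : unitriangularAffine.index = 16 := by
  refine (index_comap_of_surjective (zpowers upperShear) rightHom_surjective).trans ?_
  have := index_mul_card (zpowers upperShear)
  rw [card_zpowers_upperShear, card_GL23] at this
  omega

theorem card_unitriangularAffine : Nat.card unitriangularAffine = 27 := by
  have := card_mul_index unitriangularAffine
  rw [index_unitriangularAffine, card_AGL23] at this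
  omega

def sylowUnitriangularAffine : Sylow 3 AGL23 :=
  (IsPGroup.of_card (n := 3) card_unitriangularAffine).toSylow
    (by rw [index_unitriangularAffine]; decide)

instance : Finite AGL23 := Finite.of_equiv _ SemidirectProduct.equivProd.symm

/-- For a Sylow 3-subgroup `S` of `X = AGL₂(3)`, `C_X(S) = Z(S)` is cyclic of
order 3. -/
theorem stmt9 (S : Sylow 3 AGL23) :
    Subgroup.centralizer ((S : Subgroup AGL23) : Set AGL23) =
        Subgroup.map (S : Subgroup AGL23).subtype
          (Subgroup.center ↥(S : Subgroup AGL23)) ∧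
      IsCyclic ↥(Subgroup.center ↥(S : Subgroup AGL23)) ∧
      Nat.card ↥(Subgroup.center ↥(S : Subgroup AGL23)) = 3 := by
  obtain ⟨g, rfl⟩ := MulAction.exists_smul_eq AGL23 sylowUnitriangularAffine S
  have hcent : centralizer ((MulAut.conj g • unitriangularAffine : Subgroup AGL23) : Set AGL23) =
      MulAut.conj g • zpowers translationE₁ := by
    rw [centralizer_pointwise_smul, centralizer_unitriangularAffine]
  refine centralizer_eq_map_subtype_center_of_card_prime
    (H := MulAut.conj g • unitriangularAffine) ?_ ?_
  · rw [hcent, pointwise_smul_le_pointwise_smul_iff]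
    exact zpowers_translationE₁_le_unitriangularAffine
  · rw [hcent, ← card_zpowers_translationE₁]
    exact Nat.card_congr (equivSMul _ _).toEquiv.symm
end
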